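/- arXiv:1711.03848 — 2 statements merged into one kernel-verified Lean document; each statement's English description precedes it below -/
import Mathlib

section
/- Let α ∈ (0,1), n ≥ 1, and let a_0, …, a_n be independent real-valued random variables with P(a_i > 0) = α and P(a_i < 0) = 1 − α for every i. For every integer k ≥ 0, the conditional probabilities satisfy the recursions u_{k,n} = α·u_{k,n−1} + (1−α)·v_{k−1,n−1} and v_{k,n} = α·u_{k−1,n−1} + (1−α)·v_{k,n−1}. -/
open MeasureTheory ProbabilityTheory

/-- Number of sign changes of the sequence `a 0, a 1, …, a N` (there are `N`
consecutive pairs): the number of indices `0 ≤ i ≤ N - 1` with `a i * a (i+1) < 0`. -/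
noncomputable def signChanges {Ω : Type*} (a : ℕ → Ω → ℝ) (N : ℕ) (ω : Ω) : ℕ :=
  ((Finset.range N).filter fun i => a i ω * a (i + 1) ω < 0).card

/-- `u k N`: the conditional probability, given `a N > 0`, that `(a 0, …, a N)`
has exactly `k` sign changes. -/
noncomputable def condProbPos {Ω : Type*} [MeasurableSpace Ω] (μ : Measure Ω)
    (a : ℕ → Ω → ℝ) (k N : ℕ) : ℝ :=
  ((μ[|{ω | 0 < a N ω}]) {ω | signChanges a N ω = k}).toReal

/-- `v k N`: the conditional probability, given `a N < 0`, that `(a 0, …, a N)`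
has exactly `k` sign changes. -/
noncomputable def condProbNeg {Ω : Type*} [MeasurableSpace Ω] (μ : Measure Ω)
    (a : ℕ → Ω → ℝ) (k N : ℕ) : ℝ :=
  ((μ[|{ω | a N ω < 0}]) {ω | signChanges a N ω = k}).toReal

/-! Given the signs of `a N` and `a (N + 1)`, the number of sign changes of `(a 0, …, a (N + 1))`
is that of `(a 0, …, a N)`, plus one exactly when the two signs differ. Since `a (N + 1)` is
independent of `(a 0, …, a N)` and `a N ≠ 0` almost surely, splitting on the sign of `a N` gives
the recursion for `u`. The recursion for `v` is the one for `u` applied to `-a`, which has the same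
sign changes and exchanges the events `0 < a i` and `a i < 0`. -/

open Set

section SignChanges

variable {Ω : Type*} (a : ℕ → Ω → ℝ) (N : ℕ) (ω : Ω)

lemma signChanges_succ :
    signChanges a (N + 1) ω =
      signChanges a N ω + if a N ω * a (N + 1) ω < 0 then 1 else 0 := by
  unfold signChanges
  rw [Finset.range_add_one, Finset.filter_insert]
  split
  · rw [Finset.card_insert_of_notMem (by simp)]
  · simp

variable {a N ω}

lemma signChanges_succ_of_mul_pos (h : 0 < a N ω * a (N + 1) ω) :
    signChanges a (N + 1) ω = signChanges a N ω := by
  simp [signChanges_succ, h.not_gt]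

lemma signChanges_succ_of_mul_neg (h : a N ω * a (N + 1) ω < 0) :
    signChanges a (N + 1) ω = signChanges a N ω + 1 := by
  simp [signChanges_succ, h]

@[simp]
lemma signChanges_neg : signChanges (-a) N = signChanges a N := by
  funext ω
  simp [signChanges]

lemma measurable_signChanges {mΩ : MeasurableSpace Ω} (h : ∀ i ≤ N, Measurable (a i)) :
    Measurable (signChanges a N) := by
  have hsum : signChanges a N = fun ω ↦
      ∑ i ∈ Finset.range N, if a i ω * a (i + 1) ω < 0 then 1 else 0 := by
    funext ω
    simp only [signChanges, Finset.card_filter]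
  rw [hsum]
  refine Finset.measurable_sum _ fun i hi ↦ Measurable.ite ?_ measurable_const measurable_const
  have hi := Finset.mem_range.mp hi
  exact measurableSet_lt ((h i hi.le).mul (h (i + 1) hi)) measurable_const

end SignChanges

section

variable {Ω : Type*} {mΩ : MeasurableSpace Ω} {μ : Measure Ω} {a : ℕ → Ω → ℝ}

lemma measureReal_inter_eq_mul_cond [IsFiniteMeasure μ] {s : Set Ω} (hs : MeasurableSet s)
    (t : Set Ω) : μ.real (s ∩ t) = μ.real s * (μ[|s] t).toReal := by
  rw [measureReal_def, ← cond_mul_eq_inter hs t μ, ENNReal.toReal_mul, mul_comm, measureReal_def]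

lemma ae_ne_zero_of_measure_pos_add_measure_neg [IsProbabilityMeasure μ] {f : Ω → ℝ}
    (hf : Measurable f) (h : μ {ω | 0 < f ω} + μ {ω | f ω < 0} = 1) : ∀ᵐ ω ∂μ, f ω ≠ 0 := by
  have hne : {ω | f ω ≠ 0} = {ω | 0 < f ω} ∪ {ω | f ω < 0} := by
    ext ω
    exact ne_iff_lt_or_gt.trans or_comm
  have hneg : MeasurableSet {ω | f ω < 0} := measurableSet_lt hf measurable_const
  rw [ae_iff, ← compl_ofPred, hne,
    prob_compl_eq_zero_iff ((measurableSet_lt measurable_const hf).union hneg)]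
  have hdisj : Disjoint {ω | 0 < f ω} {ω | f ω < 0} :=
    disjoint_left.2 fun _ h₁ h₂ ↦ lt_asymm (α := ℝ) h₁ h₂
  rwa [measure_union hdisj hneg]

lemma measureReal_eq_inter_pos_add_inter_neg [IsFiniteMeasure μ] {f : Ω → ℝ} (hf : Measurable f)
    (h : ∀ᵐ ω ∂μ, f ω ≠ 0) (E : Set Ω) :
    μ.real E = μ.real (E ∩ {ω | 0 < f ω}) + μ.real (E ∩ {ω | f ω < 0}) := by
  rw [← measureReal_inter_add_sdiff (s := E) (measurableSet_lt measurable_const hf)]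
  congr 1
  refine measureReal_congr (Filter.eventuallyEq_set.2 (h.mono fun ω hω ↦ ?_))
  simp [hω.le_iff_lt]

lemma indep_iSup_comap_lt_comap_of_iIndepFun {n : ℕ} (hmeas : ∀ i, Measurable (a i))
    (hindep : iIndepFun (fun i : Fin (n + 1) ↦ a i) μ) :
    Indep (⨆ (i : Fin (n + 1)) (_ : (i : ℕ) < n), MeasurableSpace.comap (a i) inferInstance)
      (MeasurableSpace.comap (a n) inferInstance) μ := by
  simpa using indep_iSup_of_disjoint (fun i : Fin (n + 1) ↦ (hmeas i).comap_le) hindep.iIndep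
    (S := {i | (i : ℕ) < n}) (T := {Fin.last n}) (by simp)

lemma measureReal_signChanges_inter_preimage_eq_mul {N : ℕ} (hmeas : ∀ i, Measurable (a i))
    (hindep : iIndepFun (fun i : Fin (N + 2) ↦ a i) μ) (K : Set ℕ) {s t : Set ℝ}
    (hs : MeasurableSet s) (ht : MeasurableSet t) :
    μ.real (a N ⁻¹' s ∩ signChanges a N ⁻¹' K ∩ a (N + 1) ⁻¹' t) =
      μ.real (a N ⁻¹' s ∩ signChanges a N ⁻¹' K) * μ.real (a (N + 1) ⁻¹' t) := by
  set past := ⨆ (i : Fin (N + 2)) (_ : (i : ℕ) < N + 1),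
    MeasurableSpace.comap (a i) inferInstance
  have hpast : ∀ i ≤ N, Measurable[past] (a i) := fun i hi ↦
    Measurable.of_comap_le (le_iSup₂_of_le (⟨i, by omega⟩ : Fin (N + 2)) (by simp; omega) le_rfl)
  have hE : MeasurableSet[past] (a N ⁻¹' s ∩ signChanges a N ⁻¹' K) :=
    (hpast N le_rfl hs).inter (measurable_signChanges (mΩ := past) hpast .of_discrete)
  simp only [measureReal_def, ← ENNReal.toReal_mul]
  congr 1
  exact (Indep_iff _ _ μ).1 (indep_iSup_comap_lt_comap_of_iIndepFun hmeas hindep) _ _ hE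
    ⟨t, ht, rfl⟩

@[simp]
lemma condProbPos_neg (k N : ℕ) : condProbPos μ (-a) k N = condProbNeg μ a k N := by
  simp [condProbPos, condProbNeg]

@[simp]
lemma condProbNeg_neg (k N : ℕ) : condProbNeg μ (-a) k N = condProbPos μ a k N := by
  simp [condProbPos, condProbNeg]

theorem condProbPos_succ [IsFiniteMeasure μ] {N : ℕ} (hmeas : ∀ i, Measurable (a i))
    (hindep : iIndepFun (fun i : Fin (N + 2) ↦ a i) μ) (hN : ∀ᵐ ω ∂μ, a N ω ≠ 0)
    (hsucc : μ.real {ω | 0 < a (N + 1) ω} ≠ 0) (k : ℕ) :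
    condProbPos μ a k (N + 1) = μ.real {ω | 0 < a N ω} * condProbPos μ a k N +
      μ.real {ω | a N ω < 0} * (if k = 0 then 0 else condProbNeg μ a (k - 1) N) := by
  have hu : ∀ j M, μ.real {ω | 0 < a M ω} * condProbPos μ a j M =
      μ.real ({ω | 0 < a M ω} ∩ {ω | signChanges a M ω = j}) := fun j M ↦
    (measureReal_inter_eq_mul_cond (measurableSet_lt measurable_const (hmeas M)) _).symm
  have hv : μ.real {ω | a N ω < 0} * (if k = 0 then 0 else condProbNeg μ a (k - 1) N) =
      μ.real ({ω | a N ω < 0} ∩ {ω | signChanges a N ω + 1 = k}) := by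
    rcases k with _ | j
    · simp
    · simpa [condProbNeg] using
        (measureReal_inter_eq_mul_cond (measurableSet_lt (hmeas N) measurable_const) _).symm
  have hsame : {ω | 0 < a (N + 1) ω} ∩ {ω | signChanges a (N + 1) ω = k} ∩ {ω | 0 < a N ω} =
      {ω | 0 < a N ω} ∩ {ω | signChanges a N ω = k} ∩ {ω | 0 < a (N + 1) ω} := by
    ext ω
    simp only [mem_inter_iff, mem_ofPred_eq]
    grind [signChanges_succ_of_mul_pos, mul_pos]
  have hflip : {ω | 0 < a (N + 1) ω} ∩ {ω | signChanges a (N + 1) ω = k} ∩ {ω | a N ω < 0} =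
      {ω | a N ω < 0} ∩ {ω | signChanges a N ω + 1 = k} ∩ {ω | 0 < a (N + 1) ω} := by
    ext ω
    simp only [mem_inter_iff, mem_ofPred_eq]
    grind [signChanges_succ_of_mul_neg, mul_neg_of_neg_of_pos]
  apply mul_left_cancel₀ hsucc
  calc μ.real {ω | 0 < a (N + 1) ω} * condProbPos μ a k (N + 1)
      = μ.real ({ω | 0 < a (N + 1) ω} ∩ {ω | signChanges a (N + 1) ω = k}) := hu k (N + 1)
    _ = μ.real ({ω | 0 < a N ω} ∩ {ω | signChanges a N ω = k} ∩ {ω | 0 < a (N + 1) ω}) +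
        μ.real ({ω | a N ω < 0} ∩ {ω | signChanges a N ω + 1 = k} ∩ {ω | 0 < a (N + 1) ω}) := by
      rw [measureReal_eq_inter_pos_add_inter_neg (hmeas N) hN, hsame, hflip]
    _ = (μ.real ({ω | 0 < a N ω} ∩ {ω | signChanges a N ω = k}) +
          μ.real ({ω | a N ω < 0} ∩ {ω | signChanges a N ω + 1 = k})) *
        μ.real {ω | 0 < a (N + 1) ω} := by
      rw [add_mul]
      congr 1
      · exact measureReal_signChanges_inter_preimage_eq_mul hmeas hindep {k}
          measurableSet_Ioi measurableSet_Ioi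
      · exact measureReal_signChanges_inter_preimage_eq_mul hmeas hindep {j | j + 1 = k}
          measurableSet_Iio measurableSet_Ioi
    _ = _ := by rw [mul_comm, hu, hv]

end

/-- First-order recursions for the conditional sign-change probabilities:
`u_{k,n} = α·u_{k,n−1} + (1−α)·v_{k−1,n−1}` and
`v_{k,n} = α·u_{k−1,n−1} + (1−α)·v_{k,n−1}`
(with the convention `u_{−1,·} = v_{−1,·} = 0`). -/
theorem condProb_signChanges_recursion
    {Ω : Type*} [MeasurableSpace Ω] (μ : Measure Ω) [IsProbabilityMeasure μ]
    (n : ℕ) (hn : 1 ≤ n) (α : ℝ) (hα : α ∈ Set.Ioo (0 : ℝ) 1) (a : ℕ → Ω → ℝ)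
    (hmeas : ∀ i, Measurable (a i))
    (hindep : iIndepFun
      (fun i : Fin (n + 1) => a i) μ)
    (hpos : ∀ i ≤ n, μ {ω | 0 < a i ω} = ENNReal.ofReal α)
    (hneg : ∀ i ≤ n, μ {ω | a i ω < 0} = ENNReal.ofReal (1 - α)) :
    ∀ k : ℕ,
      condProbPos μ a k n =
        α * condProbPos μ a k (n - 1) +
          (1 - α) * (if k = 0 then 0 else condProbNeg μ a (k - 1) (n - 1)) ∧
      condProbNeg μ a k n =
        α * (if k = 0 then 0 else condProbPos μ a (k - 1) (n - 1)) +
          (1 - α) * condProbNeg μ a k (n - 1) := by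
  obtain ⟨N, rfl⟩ : ∃ N, n = N + 1 := ⟨n - 1, by omega⟩
  obtain ⟨hα₀, hα₁⟩ := hα
  have hposR : ∀ i ≤ N + 1, μ.real {ω | 0 < a i ω} = α := fun i hi ↦ by
    rw [measureReal_def, hpos i hi, ENNReal.toReal_ofReal hα₀.le]
  have hnegR : ∀ i ≤ N + 1, μ.real {ω | a i ω < 0} = 1 - α := fun i hi ↦ by
    rw [measureReal_def, hneg i hi, ENNReal.toReal_ofReal (by linarith)]
  have hN : ∀ᵐ ω ∂μ, a N ω ≠ 0 := by
    refine ae_ne_zero_of_measure_pos_add_measure_neg (hmeas N) ?_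
    rw [hpos N (by omega), hneg N (by omega), ← ENNReal.ofReal_add hα₀.le (by linarith)]
    simp
  intro k
  simp only [Nat.add_sub_cancel]
  constructor
  · rw [condProbPos_succ hmeas hindep hN (by rw [hposR _ le_rfl]; exact hα₀.ne') k,
      hposR N (by omega), hnegR N (by omega)]
  · have hsymm := condProbPos_succ (a := -a) (fun i ↦ (hmeas i).neg)
      (hindep.comp (fun _ ↦ Neg.neg) fun _ ↦ measurable_neg) (hN.mono fun _ ↦ neg_ne_zero.2)
      (by simp only [Pi.neg_apply, neg_pos]; rw [hnegR _ le_rfl]; linarith) k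
    simp only [condProbPos_neg, condProbNeg_neg, Pi.neg_apply, neg_pos, neg_lt_zero] at hsymm
    rw [hsymm, hposR N (by omega), hnegR N (by omega)]
    ring
end

section
/- Let d ≥ 2, α ∈ [0,1], and let β_0, …, β_{d−1} be independent real-valued random variables with P(β_k > 0) = α and P(β_k < 0) = 1 − α for every k. With p_m the probability that P(y) = Σ_{k=0}^{d−1} β_k·C(d−1,k)·y^k has exactly m roots in (0, ∞) counted with multiplicity, one has: (i) p_0 ≥ α^d + (1−α)^d ≥ 1/2^{d−1}; and (ii) if α ≠ 1/2, then p_1 ≥ 2α(1−α)·((1−α)^{d−1} − α^{d−1})/(1 − 2α). -/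
/-!
By Descartes' rule of signs, `P` has at most as many positive roots as there are sign changes
in `β_0, …, β_{d-1}` (the binomial weights are positive). So `P` has no positive root when all
`β_k` share a sign, and exactly one when the signs switch once, at some `1 ≤ j < d`: at most one
by Descartes, at least one by the intermediate value theorem since `P(0)` and the leading
coefficient have opposite signs. By independence, each such sign pattern is an event of
probability `α^j (1-α)^(d-j)` or `(1-α)^j α^(d-j)`; these events are disjoint, and summing the
corresponding geometric series gives the bounds. The bound `α^d + (1-α)^d ≥ 2^{1-d}` is the
power mean inequality.
-/

open MeasureTheory ProbabilityTheory Polynomial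

/-- The number of roots in `(0, ∞)`, counted with multiplicity, of the polynomial
`P(y) = Σ_{k=0}^{d−1} β_k · C(d−1, k) · y^k`. Its positive roots are the internal
equilibria of a `d`-player two-strategy random evolutionary game. -/
noncomputable def numInternalEquilibria (d : ℕ) (β : Fin d → ℝ) : ℕ :=
  Multiset.card (Multiset.filter (fun y => 0 < y)
    (Polynomial.roots (∑ k : Fin d,
      Polynomial.C (β k * ((d - 1).choose (k : ℕ) : ℝ)) * Polynomial.X ^ (k : ℕ))))

namespace Polynomial

variable {P : ℝ[X]}

theorem signVariations_eq_zero_of_coeff_nonneg (h : ∀ n, 0 ≤ P.coeff n) :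
    P.signVariations = 0 := by
  induction hN : P.support.card using Nat.strong_induction_on generalizing P with
  | _ N ih =>
  rcases eq_or_ne P 0 with rfl | hP
  · simp
  have hE : ∀ n, 0 ≤ P.eraseLead.coeff n := fun n => by
    rw [eraseLead_coeff]; split_ifs <;> simp [h n]
  have hlc : 0 < P.leadingCoeff := (h _).lt_of_ne' (leadingCoeff_ne_zero.mpr hP)
  rw [signVariations_eq_eraseLead_add_ite hP, ih _ (hN ▸ eraseLead_support_card_lt hP) hE rfl]
  have hElc : 0 ≤ P.eraseLead.leadingCoeff := hE _
  rcases hElc.eq_or_lt with he | he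
  · simp [← he, sign_pos hlc]
  · simp [sign_pos hlc, sign_pos he]

theorem coeff_nonneg_of_leadingCoeff_pos {j : ℕ} (hlow : ∀ n < j, 0 ≤ P.coeff n)
    (hhigh : ∀ n, j ≤ n → P.coeff n ≤ 0) (hlc : 0 < P.leadingCoeff) (n : ℕ) :
    0 ≤ P.coeff n := by
  rcases lt_or_ge n j with hn | hn
  · exact hlow n hn
  · refine (coeff_eq_zero_of_natDegree_lt ?_).ge
    by_contra! hdeg
    exact (hhigh _ (hn.trans hdeg)).not_gt hlc

theorem signVariations_le_one_of_coeff_nonneg_of_coeff_nonpos (j : ℕ)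
    (hlow : ∀ n < j, 0 ≤ P.coeff n) (hhigh : ∀ n, j ≤ n → P.coeff n ≤ 0) :
    P.signVariations ≤ 1 := by
  induction hN : P.support.card using Nat.strong_induction_on generalizing P with
  | _ N ih =>
  rcases eq_or_ne P 0 with rfl | hP
  · simp
  rcases lt_or_ge 0 P.leadingCoeff with hlc | hlc
  · simp [signVariations_eq_zero_of_coeff_nonneg
      (coeff_nonneg_of_leadingCoeff_pos hlow hhigh hlc)]
  have hlc : P.leadingCoeff < 0 := hlc.lt_of_ne (leadingCoeff_ne_zero.mpr hP)
  have hElow : ∀ n < j, 0 ≤ P.eraseLead.coeff n := fun n hn => by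
    rw [eraseLead_coeff]; split_ifs <;> simp [hlow n hn]
  have hEhigh : ∀ n, j ≤ n → P.eraseLead.coeff n ≤ 0 := fun n hn => by
    rw [eraseLead_coeff]; split_ifs <;> simp [hhigh n hn]
  rw [signVariations_eq_eraseLead_add_ite hP, sign_neg hlc]
  rcases lt_or_ge 0 P.eraseLead.leadingCoeff with he | he
  · simp [signVariations_eq_zero_of_coeff_nonneg
      (coeff_nonneg_of_leadingCoeff_pos hElow hEhigh he), sign_pos he]
  · have := ih _ (hN ▸ eraseLead_support_card_lt hP) hElow hEhigh rfl
    rcases he.eq_or_lt with he | he <;> simp [he, sign_neg, this]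

theorem roots_countP_pos_eq_zero_of_coeff_nonneg (h : ∀ n, 0 ≤ P.coeff n) :
    P.roots.countP (0 < ·) = 0 :=
  Nat.eq_zero_of_le_zero <|
    (roots_countP_pos_le_signVariations P).trans (signVariations_eq_zero_of_coeff_nonneg h).le

theorem exists_pos_isRoot_of_coeff_zero_pos_of_leadingCoeff_neg (h0 : 0 < P.coeff 0)
    (hlc : P.leadingCoeff < 0) : ∃ y, 0 < y ∧ P.IsRoot y := by
  have hdeg : 0 < P.degree := by
    by_contra! hdeg
    rw [eq_C_of_degree_le_zero hdeg, leadingCoeff_C] at hlc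
    exact hlc.not_gt h0
  obtain ⟨y₁, hy₁, hy₁pos⟩ := ((P.tendsto_atBot_of_leadingCoeff_nonpos hdeg hlc.le).eventually
    (Filter.eventually_lt_atBot 0)).and (Filter.eventually_gt_atTop 0) |>.exists
  have hsign : (0 : ℝ) ∈ Set.Ioo (P.eval y₁) (P.eval 0) :=
    ⟨hy₁, by rwa [← coeff_zero_eq_eval_zero]⟩
  obtain ⟨y, hy, hroot⟩ := intermediate_value_Ioo' hy₁pos.le P.continuous.continuousOn hsign
  exact ⟨y, hy.1, hroot⟩

theorem roots_countP_pos_eq_one_of_coeff_nonneg_of_coeff_nonpos (j : ℕ)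
    (hlow : ∀ n < j, 0 ≤ P.coeff n) (hhigh : ∀ n, j ≤ n → P.coeff n ≤ 0)
    (h0 : 0 < P.coeff 0) {m : ℕ} (hm : P.coeff m < 0) : P.roots.countP (0 < ·) = 1 := by
  have hP : P ≠ 0 := by rintro rfl; simp at h0
  have hlc : P.leadingCoeff < 0 := by
    have hjm : j ≤ m := by by_contra! h; exact (hlow m h).not_gt hm
    exact (hhigh _ (hjm.trans (le_natDegree_of_ne_zero hm.ne))).lt_of_ne
      (leadingCoeff_ne_zero.mpr hP)
  obtain ⟨y, hy, hroot⟩ := exists_pos_isRoot_of_coeff_zero_pos_of_leadingCoeff_neg h0 hlc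
  refine le_antisymm ((roots_countP_pos_le_signVariations P).trans
    (signVariations_le_one_of_coeff_nonneg_of_coeff_nonpos j hlow hhigh)) ?_
  exact Multiset.countP_pos.mpr ⟨y, (mem_roots hP).mpr hroot, hy⟩

end Polynomial

noncomputable def equilibriumPoly (d : ℕ) (a : Fin d → ℝ) : ℝ[X] :=
  ∑ k : Fin d, C (a k * ((d - 1).choose (k : ℕ) : ℝ)) * X ^ (k : ℕ)

section EquilibriumPoly

variable {d : ℕ} (a : Fin d → ℝ)

theorem numInternalEquilibria_eq_roots_countP :
    numInternalEquilibria d a = (equilibriumPoly d a).roots.countP (0 < ·) :=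
  (Multiset.countP_eq_card_filter _ _).symm

theorem coeff_equilibriumPoly (n : ℕ) : (equilibriumPoly d a).coeff n =
    if h : n < d then a ⟨n, h⟩ * ((d - 1).choose n : ℝ) else 0 := by
  simp only [equilibriumPoly, finsetSum_coeff, coeff_C_mul_X_pow]
  split_ifs with h
  · rw [Finset.sum_eq_single ⟨n, h⟩ (fun k _ hk => if_neg fun hn => hk (Fin.ext hn.symm))
      (by simp)]
    simp
  · exact Finset.sum_eq_zero fun k _ => if_neg (by rintro rfl; exact h k.isLt)

theorem equilibriumPoly_neg : equilibriumPoly d (-a) = -equilibriumPoly d a := by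
  simp [equilibriumPoly, ← Finset.sum_neg_distrib]

theorem numInternalEquilibria_neg : numInternalEquilibria d (-a) = numInternalEquilibria d a := by
  simp only [numInternalEquilibria_eq_roots_countP, equilibriumPoly_neg, roots_neg]

theorem numInternalEquilibria_eq_zero_of_nonneg (ha : ∀ k, 0 ≤ a k) :
    numInternalEquilibria d a = 0 := by
  rw [numInternalEquilibria_eq_roots_countP]
  refine roots_countP_pos_eq_zero_of_coeff_nonneg fun n => ?_
  rw [coeff_equilibriumPoly]
  split_ifs
  · exact mul_nonneg (ha _) (Nat.cast_nonneg _)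
  · exact le_rfl

theorem numInternalEquilibria_eq_one_of_sign_change {j : ℕ} (hj : 0 < j) (hjd : j < d)
    (hlow : ∀ k : Fin d, (k : ℕ) < j → 0 < a k) (hhigh : ∀ k : Fin d, j ≤ k → a k < 0) :
    numInternalEquilibria d a = 1 := by
  have hchoose : ∀ n < d, (0 : ℝ) < (d - 1).choose n := fun n hn => by
    exact_mod_cast Nat.choose_pos (by omega)
  rw [numInternalEquilibria_eq_roots_countP]
  refine roots_countP_pos_eq_one_of_coeff_nonneg_of_coeff_nonpos j (fun n hn => ?_)
    (fun n hn => ?_) ?_ (m := d - 1) ?_ <;> rw [coeff_equilibriumPoly]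
  · rw [dif_pos (by omega)]
    exact (mul_pos (hlow _ hn) (hchoose n (by omega))).le
  · split_ifs with h
    · exact (mul_neg_of_neg_of_pos (hhigh _ hn) (hchoose n h)).le
    · exact le_rfl
  · rw [dif_pos (by omega)]
    exact mul_pos (hlow _ hj) (hchoose 0 (by omega))
  · rw [dif_pos (by omega)]
    exact mul_neg_of_neg_of_pos (hhigh _ (by simp; omega)) (hchoose _ (by omega))

end EquilibriumPoly

def signSet : Bool → Set ℝ
  | true => Set.Ioi 0
  | false => Set.Iio 0

theorem measurableSet_signSet (b : Bool) : MeasurableSet (signSet b) := by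
  cases b
  · exact measurableSet_Iio
  · exact measurableSet_Ioi

theorem neg_mem_signSet {x : ℝ} {b : Bool} : -x ∈ signSet b ↔ x ∈ signSet !b := by
  cases b <;> simp [signSet]

theorem disjoint_signSet {b c : Bool} (h : b ≠ c) : Disjoint (signSet b) (signSet c) := by
  cases b <;> cases c <;> simp_all [signSet]

section SignEvent

variable {Ω ι : Type*} {β : ι → Ω → ℝ}

def signEvent (β : ι → Ω → ℝ) (σ : ι → Bool) : Set Ω :=
  ⋂ k, β k ⁻¹' signSet (σ k)

theorem mem_signEvent {σ : ι → Bool} {ω : Ω} :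
    ω ∈ signEvent β σ ↔ ∀ k, β k ω ∈ signSet (σ k) :=
  Set.mem_iInter

theorem disjoint_signEvent {σ τ : ι → Bool} (h : σ ≠ τ) :
    Disjoint (signEvent β σ) (signEvent β τ) := by
  obtain ⟨k, hk⟩ := Function.ne_iff.mp h
  exact ((disjoint_signSet hk).preimage (β k)).mono (Set.iInter_subset _ k) (Set.iInter_subset _ k)

variable [MeasurableSpace Ω] {μ : Measure Ω} [Fintype ι]

theorem measurableSet_signEvent (hβ : ∀ k, Measurable (β k)) (σ : ι → Bool) :
    MeasurableSet (signEvent β σ) :=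
  .iInter fun k => hβ k (measurableSet_signSet _)

theorem measureReal_signEvent [IsFiniteMeasure μ] (hindep : iIndepFun β μ) {p : Bool → ℝ}
    (hp : ∀ k b, μ.real (β k ⁻¹' signSet b) = p b) (σ : ι → Bool) :
    μ.real (signEvent β σ) = ∏ k, p (σ k) := by
  rw [measureReal_def, signEvent,
    hindep.meas_iInter fun k => ⟨_, measurableSet_signSet (σ k), rfl⟩, ENNReal.toReal_prod]
  exact Finset.prod_congr rfl fun k _ => hp k (σ k)

theorem sum_measureReal_signEvent_le [IsFiniteMeasure μ] (hβ : ∀ k, Measurable (β k))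
    {κ : Type*} {s : Finset κ} {σ : κ → ι → Bool} (hσ : Set.InjOn σ s) {A : Set Ω}
    (hA : ∀ i ∈ s, signEvent β (σ i) ⊆ A) :
    ∑ i ∈ s, μ.real (signEvent β (σ i)) ≤ μ.real A := by
  rw [← measureReal_biUnion_finset
    (fun i hi j hj hij => disjoint_signEvent ((hσ.ne_iff hi hj).mpr hij))
    (fun i _ => measurableSet_signEvent hβ _)]
  exact measureReal_mono (Set.iUnion₂_subset hA)

end SignEvent

def stepPattern {d : ℕ} (b : Bool) (j : ℕ) (k : Fin d) : Bool :=
  if (k : ℕ) < j then b else !b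

theorem prod_stepPattern {M : Type*} [CommMonoid M] (f : Bool → M) {d j : ℕ} (hj : j ≤ d)
    (b : Bool) : ∏ k : Fin d, f (stepPattern b j k) = f b ^ j * f (!b) ^ (d - j) := by
  unfold stepPattern
  rw [Fin.prod_univ_eq_prod_range (fun k => f (if k < j then b else !b)),
    ← Finset.prod_range_mul_prod_Ico _ hj,
    Finset.prod_eq_pow_card fun k hk => by rw [if_pos (Finset.mem_range.mp hk)],
    Finset.prod_eq_pow_card fun k hk => by rw [if_neg (Finset.mem_Ico.mp hk).1.not_gt]]
  simp

theorem stepPattern_injOn {d : ℕ} :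
    Set.InjOn (fun bj : Bool × ℕ => stepPattern (d := d) bj.1 bj.2)
      (Finset.univ ×ˢ Finset.Ico 1 d : Finset (Bool × ℕ)) := by
  rintro ⟨b, j⟩ hbj ⟨c, i⟩ hci h
  simp only [Finset.coe_product, Finset.coe_univ, Set.mem_prod, Set.mem_univ, Finset.coe_Ico,
    Set.mem_Ico, true_and] at hbj hci
  have hb : b = c := by
    simpa [stepPattern, show 0 < j by omega, show 0 < i by omega] using congrFun h ⟨0, by omega⟩
  subst hb
  have key : ∀ {j i}, j < i → i < d → stepPattern (d := d) b j ≠ stepPattern b i :=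
    fun hji hid h => by simpa [stepPattern, hji] using congrFun h ⟨_, hji.trans hid⟩
  rcases lt_trichotomy j i with hji | rfl | hij
  · exact (key hji hci.2 h).elim
  · rfl
  · exact (key hij hbj.2 h.symm).elim

theorem sum_Ico_pow_mul_pow_mul_sub (x y : ℝ) (d : ℕ) :
    (∑ j ∈ Finset.Ico 1 d, x ^ j * y ^ (d - j)) * (x - y) =
      x * y * (x ^ (d - 1) - y ^ (d - 1)) := by
  rcases Nat.eq_zero_or_pos d with rfl | hd
  · simp
  have hsum : ∑ j ∈ Finset.Ico 1 d, x ^ j * y ^ (d - j) =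
      y * ∑ j ∈ Finset.Ico 1 d, x ^ j * y ^ (d - 1 - j) := by
    rw [Finset.mul_sum]
    refine Finset.sum_congr rfl fun j hj => ?_
    rw [show d - j = d - 1 - j + 1 by have := (Finset.mem_Ico.mp hj).2; omega, pow_succ]
    ring
  rw [hsum, mul_assoc, (Commute.all x y).geom_sum₂_Ico_mul hd]
  obtain ⟨n, rfl⟩ := Nat.exists_eq_add_one.mpr hd
  simp only [Nat.add_sub_cancel]
  ring

theorem sum_Ico_pow_mul_one_sub_pow_add_eq {α : ℝ} (hα : α ≠ 1 / 2) (d : ℕ) :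
    ∑ j ∈ Finset.Ico 1 d, (α ^ j * (1 - α) ^ (d - j) + (1 - α) ^ j * α ^ (d - j)) =
      2 * α * (1 - α) * ((1 - α) ^ (d - 1) - α ^ (d - 1)) / (1 - 2 * α) := by
  rw [eq_div_iff fun h => hα (by linarith), Finset.sum_add_distrib, add_mul]
  linear_combination (sum_Ico_pow_mul_pow_mul_sub (1 - α) α d) -
    (sum_Ico_pow_mul_pow_mul_sub α (1 - α) d)

section SignPatterns

variable {d : ℕ} {a : Fin d → ℝ}

theorem numInternalEquilibria_eq_zero_of_mem_signSet {b : Bool} (ha : ∀ k, a k ∈ signSet b) :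
    numInternalEquilibria d a = 0 := by
  wlog hb : b = true generalizing a b
  · rw [← numInternalEquilibria_neg]
    exact this (b := true) (fun k => neg_mem_signSet.mpr (by simpa [hb] using ha k)) rfl
  subst hb
  exact numInternalEquilibria_eq_zero_of_nonneg a fun k => le_of_lt (ha k)

theorem numInternalEquilibria_eq_one_of_mem_signSet_stepPattern {b : Bool} {j : ℕ} (hj : 0 < j)
    (hjd : j < d) (ha : ∀ k, a k ∈ signSet (stepPattern b j k)) :
    numInternalEquilibria d a = 1 := by
  wlog hb : b = true generalizing a b
  · rw [← numInternalEquilibria_neg]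
    refine this (b := true) (fun k => neg_mem_signSet.mpr ?_) rfl
    simpa [stepPattern, hb, apply_ite] using ha k
  subst hb
  refine numInternalEquilibria_eq_one_of_sign_change a hj hjd (fun k hk => ?_) (fun k hk => ?_)
  · simpa [stepPattern, hk, signSet] using ha k
  · simpa [stepPattern, hk.not_gt, signSet] using ha k

end SignPatterns

/-- For a `d`-player two-strategy random evolutionary game with
`P(β_k > 0) = α` and `P(β_k < 0) = 1 − α`:
(i) `p_0 ≥ α^d + (1−α)^d ≥ 1/2^{d−1}`; and
(ii) if `α ≠ 1/2`, then `p_1 ≥ 2α(1−α)·((1−α)^{d−1} − α^{d−1})/(1 − 2α)`. -/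
theorem prob_internalEquilibria_lower_bounds_general
    {Ω : Type*} [MeasurableSpace Ω] (μ : Measure Ω) [IsProbabilityMeasure μ]
    (d : ℕ) (hd : 2 ≤ d) (α : ℝ) (hα : α ∈ Set.Icc (0 : ℝ) 1)
    (β : Fin d → Ω → ℝ)
    (hmeas : ∀ k, Measurable (β k))
    (hindep : iIndepFun β μ)
    (hpos : ∀ k, μ {ω | 0 < β k ω} = ENNReal.ofReal α)
    (hneg : ∀ k, μ {ω | β k ω < 0} = ENNReal.ofReal (1 - α)) :
    (α ^ d + (1 - α) ^ d ≤
        (μ {ω | numInternalEquilibria d (fun k => β k ω) = 0}).toReal ∧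
      (1 : ℝ) / 2 ^ (d - 1) ≤ α ^ d + (1 - α) ^ d) ∧
    (α ≠ 1 / 2 →
      2 * α * (1 - α) * ((1 - α) ^ (d - 1) - α ^ (d - 1)) / (1 - 2 * α) ≤
        (μ {ω | numInternalEquilibria d (fun k => β k ω) = 1}).toReal) := by
  obtain ⟨hα0, hα1⟩ := hα
  set p : Bool → ℝ := fun b => if b then α else 1 - α
  have hp : ∀ k b, μ.real (β k ⁻¹' signSet b) = p b := by
    intro k b
    cases b
    · exact (congrArg ENNReal.toReal (hneg k)).trans (ENNReal.toReal_ofReal (by linarith))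
    · exact (congrArg ENNReal.toReal (hpos k)).trans (ENNReal.toReal_ofReal hα0)
  have hprob := measureReal_signEvent hindep hp
  refine ⟨⟨?_, ?_⟩, fun hα2 => ?_⟩
  · calc α ^ d + (1 - α) ^ d = ∑ b : Bool, μ.real (signEvent β fun _ => b) := by
          simp [hprob, p]
      _ ≤ _ := sum_measureReal_signEvent_le hmeas
          (fun b _ c _ h => congrFun h ⟨0, by omega⟩)
          fun b _ ω hω => numInternalEquilibria_eq_zero_of_mem_signSet (mem_signEvent.mp hω)
  · rw [div_le_iff₀ (by positivity), mul_comm]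
    simpa using add_pow_le hα0 (sub_nonneg.mpr hα1) d
  · calc _ = ∑ j ∈ Finset.Ico 1 d,
            (α ^ j * (1 - α) ^ (d - j) + (1 - α) ^ j * α ^ (d - j)) :=
          (sum_Ico_pow_mul_one_sub_pow_add_eq hα2 d).symm
      _ = ∑ bj ∈ Finset.univ ×ˢ Finset.Ico 1 d,
            μ.real (signEvent β (stepPattern bj.1 bj.2)) := by
          rw [Finset.sum_product, Fintype.sum_bool, ← Finset.sum_add_distrib]
          refine Finset.sum_congr rfl fun j hj => ?_
          simp [hprob, prod_stepPattern p (Finset.mem_Ico.mp hj).2.le, p]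
      _ ≤ _ := sum_measureReal_signEvent_le hmeas stepPattern_injOn fun bj hbj ω hω => by
          have hj := (Finset.mem_Ico.mp (Finset.mem_product.mp hbj).2)
          exact numInternalEquilibria_eq_one_of_mem_signSet_stepPattern hj.1 hj.2
            (mem_signEvent.mp hω)
end
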